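/- Let S be a semigroup satisfying conditions (A), (B), (C), and let Q be the semigroup of ~-classes of Σ. Then Q is regular: for every [a,b] ∈ Q, [a,b][b,a][a,b] = [a,b]. -/

import Mathlib

/-- The bicyclic semigroup `𝓑` carried by `ℕ × ℕ`, an element being `(r, l)`;
`(m,n)(p,q) = (m - n + t, q - p + t)` with `t = max n p`. -/
structure Bicyclic where
  r : ℕ
  l : ℕ

instance : Mul Bicyclic :=
  ⟨fun x y => ⟨x.r + (max x.l y.r - x.l), y.l + (max x.l y.r - y.r)⟩⟩

/-- The inverse `(m,n)⁻¹ = (n,m)` in the bicyclic semigroup. -/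
def Bicyclic.inv (x : Bicyclic) : Bicyclic := ⟨x.l, x.r⟩

/-- `T` is a left I-order in the bicyclic semigroup `𝓑`. -/
def IsLeftIOrderBic (T : Set Bicyclic) : Prop :=
  ∀ q : Bicyclic, ∃ a ∈ T, ∃ b ∈ T, q = a.inv * b

/-- `r a`, the first coordinate of `φ a` in `𝓑`. -/
def rr {S : Type*} [Mul S] (φ : S →ₙ* Bicyclic) (a : S) : ℕ := (φ a).r

/-- `l a`, the second coordinate of `φ a` in `𝓑`. -/
def ll {S : Type*} [Mul S] (φ : S →ₙ* Bicyclic) (a : S) : ℕ := (φ a).l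

/-- Condition (A): the image of `φ` is a left I-order in `𝓑`. -/
def CondA {S : Type*} [Mul S] (φ : S →ₙ* Bicyclic) : Prop :=
  IsLeftIOrderBic (Set.range (⇑φ))

/-- Condition (B)(i): if `l x, l y ≥ r a` and `x * a = y * a` then `x = y`. -/
def CondBi {S : Type*} [Mul S] (φ : S →ₙ* Bicyclic) : Prop :=
  ∀ x y a : S, rr φ a ≤ ll φ x → rr φ a ≤ ll φ y → x * a = y * a → x = y

/-- Condition (B)(ii): if `r x, r y ≥ l a` and `a * x = a * y` then `x = y`. -/
def CondBii {S : Type*} [Mul S] (φ : S →ₙ* Bicyclic) : Prop :=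
  ∀ x y a : S, ll φ a ≤ rr φ x → ll φ a ≤ rr φ y → a * x = a * y → x = y

/-- Condition (C): for all `b c` there are `x y` with `x * b = y * c`,
`r x = r y`, `l x = r b - l b + max (l b) (l c)` and
`l y = r c - l c + max (l b) (l c)`. -/
def CondC {S : Type*} [Mul S] (φ : S →ₙ* Bicyclic) : Prop :=
  ∀ b c : S, ∃ x y : S, x * b = y * c ∧ rr φ x = rr φ y ∧
    ll φ x = rr φ b + (max (ll φ b) (ll φ c) - ll φ b) ∧
    ll φ y = rr φ c + (max (ll φ b) (ll φ c) - ll φ c)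

/-- `Σ = {(a,b) ∈ S × S : r a = r b}`. -/
abbrev Sig {S : Type*} [Mul S] (φ : S →ₙ* Bicyclic) : Type _ :=
  {p : S × S // rr φ p.1 = rr φ p.2}

/-- The relation `∼` on pairs: `(a,b) ∼ (c,d)` iff there are `x y` with
`x * a = y * c`, `x * b = y * d`, `l x = r a`, `l y = r c`, `r x = r y`. -/
def simP {S : Type*} [Mul S] (φ : S →ₙ* Bicyclic) (p q : S × S) : Prop :=
  ∃ x y : S, x * p.1 = y * q.1 ∧ x * p.2 = y * q.2 ∧
    ll φ x = rr φ p.1 ∧ ll φ y = rr φ q.1 ∧ rr φ x = rr φ y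

/-- The relation `∼` on `Σ`. -/
def sim {S : Type*} [Mul S] (φ : S →ₙ* Bicyclic) (p q : Sig φ) : Prop :=
  simP φ p.1 q.1

theorem rr_mul {S : Type*} [Mul S] (φ : S →ₙ* Bicyclic) (x a : S) :
    rr φ (x * a) = rr φ x + (max (ll φ x) (rr φ a) - ll φ x) := by
  simp only [rr, ll, map_mul]; rfl

theorem rr_mul_eq {S : Type*} [Mul S] (φ : S →ₙ* Bicyclic) {x a : S}
    (h : rr φ a ≤ ll φ x) : rr φ (x * a) = rr φ x := by
  have h1 := rr_mul φ x a
  have h2 : max (ll φ x) (rr φ a) = ll φ x := max_eq_left h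
  omega

theorem sig_mul_ok {S : Type*} [Mul S] (φ : S →ₙ* Bicyclic) {a b c d x y : S}
    (hab : rr φ a = rr φ b) (hcd : rr φ c = rr φ d)
    (hx : ll φ x = rr φ b + (max (ll φ b) (ll φ c) - ll φ b))
    (hy : ll φ y = rr φ c + (max (ll φ b) (ll φ c) - ll φ c))
    (hr : rr φ x = rr φ y) : rr φ (x * a) = rr φ (y * d) := by
  have h1 := rr_mul_eq φ (x := x) (a := a)
    (by have := le_max_left (ll φ b) (ll φ c); omega)
  have h2 := rr_mul_eq φ (x := y) (a := d)
    (by have := le_max_right (ll φ b) (ll φ c); omega)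
  omega

/-- The set `Q` of `∼`-classes of `Σ`. -/
def QT {S : Type*} [Mul S] (φ : S →ₙ* Bicyclic) : Type _ := Quot (sim φ)

/-- The `∼`-class `[a,b]` of an element of `Σ`. -/
def cls {S : Type*} [Mul S] (φ : S →ₙ* Bicyclic) (p : Sig φ) : QT φ :=
  Quot.mk _ p

/-- Packaging `(a, b)` with `r a = r b` as an element of `Σ`. -/
def mkSig {S : Type*} [Mul S] (φ : S →ₙ* Bicyclic) (a b : S)
    (h : rr φ a = rr φ b) : Sig φ := ⟨(a, b), h⟩

/-- A chosen witness `x` from condition (C) applied to `b, c`. -/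
noncomputable def cx {S : Type*} [Mul S] {φ : S →ₙ* Bicyclic} (hC : CondC φ)
    (b c : S) : S := (hC b c).choose

/-- A chosen witness `y` from condition (C) applied to `b, c`. -/
noncomputable def cy {S : Type*} [Mul S] {φ : S →ₙ* Bicyclic} (hC : CondC φ)
    (b c : S) : S := (hC b c).choose_spec.choose

theorem c_spec {S : Type*} [Mul S] {φ : S →ₙ* Bicyclic} (hC : CondC φ) (b c : S) :
    cx hC b c * b = cy hC b c * c ∧ rr φ (cx hC b c) = rr φ (cy hC b c) ∧
    ll φ (cx hC b c) = rr φ b + (max (ll φ b) (ll φ c) - ll φ b) ∧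
    ll φ (cy hC b c) = rr φ c + (max (ll φ b) (ll φ c) - ll φ c) :=
  (hC b c).choose_spec.choose_spec

/-- Representative-level multiplication: `(a,b) · (c,d) = (x * a, y * d)` where
`x, y` are the witnesses from condition (C) for `b, c`. -/
noncomputable def pairMul {S : Type*} [Mul S] {φ : S →ₙ* Bicyclic} (hC : CondC φ)
    (p q : Sig φ) : Sig φ :=
  ⟨(cx hC p.1.2 q.1.1 * p.1.1, cy hC p.1.2 q.1.1 * q.1.2),
    sig_mul_ok φ p.2 q.2 (c_spec hC p.1.2 q.1.1).2.2.1
      (c_spec hC p.1.2 q.1.1).2.2.2 (c_spec hC p.1.2 q.1.1).2.1⟩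

/-- The multiplication `[a,b][c,d] = [x*a, y*d]` on the set `Q` of `∼`-classes. -/
noncomputable def qmul {S : Type*} [Mul S] {φ : S →ₙ* Bicyclic} (hC : CondC φ)
    (u v : QT φ) : QT φ :=
  cls φ (pairMul hC (Quot.out u) (Quot.out v))

theorem ll_cx_self {S : Type*} [Mul S] {φ : S →ₙ* Bicyclic} (hC : CondC φ)
    (a : S) : ll φ (cx hC a a) = rr φ a := by
  have h := (c_spec hC a a).2.2.1
  have h2 : max (ll φ a) (ll φ a) = ll φ a := max_self _
  omega

/-- The embedding `θ : S → Q`, `a θ = [x, x*a]` for a chosen `x` with `l x = r a`. -/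
noncomputable def theta {S : Type*} [Mul S] {φ : S →ₙ* Bicyclic} (hC : CondC φ)
    (a : S) : QT φ :=
  cls φ ⟨(cx hC a a, cx hC a a * a), (rr_mul_eq φ (ll_cx_self hC a).ge).symm⟩

/-- The inverse `[a,b]⁻¹ = [b,a]` on `Q`. -/
noncomputable def qinv {S : Type*} [Mul S] {φ : S →ₙ* Bicyclic} (u : QT φ) :
    QT φ :=
  cls φ ⟨((Quot.out u).1.2, (Quot.out u).1.1), (Quot.out u).2.symm⟩

/-! Two pairs are `∼`-equivalent exactly when they have a common left multiple `(s a, s b)` with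
`l s = r a`, and `(s a, s b) ∼ (a, b)` for every such `s`. By (B)(i) the class `[x a, y d]` does
not depend on the choice of the witnesses `x, y` of (C) for `b, c`; witnesses for `s b, c` (or
`b, t c`) turn into witnesses for `b, c` after multiplying by `s` (or `t`), so the product is
well defined on classes. Then `[a,b][b,a] = [e a, e a] = [a,a]` and `[a,a][a,b] = [e a, e b] = [a,b]`
for any `e` with `l e = r a = r b`, since `(e, e)` is a witness for both products. -/

theorem ll_mul {S : Type*} [Mul S] (φ : S →ₙ* Bicyclic) (x a : S) :
    ll φ (x * a) = ll φ a + (max (ll φ x) (rr φ a) - rr φ a) := by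
  simp only [rr, ll, map_mul]; rfl

def IsMulWitness {S : Type*} [Mul S] (φ : S →ₙ* Bicyclic) (b c x y : S) : Prop :=
  x * b = y * c ∧ rr φ x = rr φ y ∧
    ll φ x = rr φ b + (max (ll φ b) (ll φ c) - ll φ b) ∧
    ll φ y = rr φ c + (max (ll φ b) (ll φ c) - ll φ c)

theorem isMulWitness_self {S : Type*} [Mul S] {φ : S →ₙ* Bicyclic} {b e : S}
    (he : ll φ e = rr φ b) : IsMulWitness φ b b e e :=
  ⟨rfl, rfl, by omega, by omega⟩

section

variable {S : Type*} [Semigroup S] {φ : S →ₙ* Bicyclic}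

theorem IsMulWitness.mul_left {b c s x y : S} (h : IsMulWitness φ (s * b) c x y)
    (hs : ll φ s = rr φ b) : IsMulWitness φ b c (x * s) y := by
  obtain ⟨hxy, hr, hlx, hly⟩ := h
  have := rr_mul φ s b
  have := ll_mul φ s b
  have := rr_mul φ x s
  have := ll_mul φ x s
  exact ⟨by rw [mul_assoc, hxy], by omega, by omega, by omega⟩

theorem IsMulWitness.mul_right {b c t x y : S} (h : IsMulWitness φ b (t * c) x y)
    (ht : ll φ t = rr φ c) : IsMulWitness φ b c x (y * t) := by
  obtain ⟨hxy, hr, hlx, hly⟩ := h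
  have := rr_mul φ t c
  have := ll_mul φ t c
  have := rr_mul φ y t
  have := ll_mul φ y t
  exact ⟨by rw [hxy, mul_assoc], by omega, by omega, by omega⟩

theorem simP_refl (hC : CondC φ) (p : S × S) : simP φ p p :=
  ⟨cx hC p.1 p.1, cx hC p.1 p.1, rfl, rfl, ll_cx_self hC p.1, ll_cx_self hC p.1, rfl⟩

theorem simP_symm {p q : S × S} (h : simP φ p q) : simP φ q p := by
  obtain ⟨x, y, h1, h2, h3, h4, h5⟩ := h
  exact ⟨y, x, h1.symm, h2.symm, h4, h3, h5.symm⟩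

theorem simP_trans (hC : CondC φ) {p q r : S × S}
    (h1 : simP φ p q) (h2 : simP φ q r) : simP φ p r := by
  obtain ⟨x, y, hxa, hxb, hlx, hly, hrxy⟩ := h1
  obtain ⟨u, v, huc, hud, hlu, hlv, hruv⟩ := h2
  obtain ⟨hst, hrst, hls, hlt⟩ := c_spec hC y u
  have := ll_mul φ (cx hC y u) x
  have := ll_mul φ (cy hC y u) v
  have := rr_mul φ (cx hC y u) x
  have := rr_mul φ (cy hC y u) v
  refine ⟨cx hC y u * x, cy hC y u * v, ?_, ?_, by omega, by omega, by omega⟩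
  · rw [mul_assoc, hxa, ← mul_assoc, hst, mul_assoc, huc, ← mul_assoc]
  · rw [mul_assoc, hxb, ← mul_assoc, hst, mul_assoc, hud, ← mul_assoc]

theorem sim_equiv (hC : CondC φ) : Equivalence (sim φ) :=
  ⟨fun p => simP_refl hC p.1, simP_symm, simP_trans hC⟩

theorem out_sim (hC : CondC φ) (p : Sig φ) : sim φ (Quot.out (cls φ p)) p :=
  (sim_equiv hC).eqvGen_iff.mp (Quot.eqvGen_exact (Quot.out_eq (cls φ p)))

theorem simP_mul_left (hC : CondC φ) {s a b : S} (hs : ll φ s = rr φ a) :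
    simP φ (s * a, s * b) (a, b) := by
  have he := ll_cx_self hC s
  have := ll_mul φ (cx hC s s) s
  refine ⟨cx hC s s, cx hC s s * s, (mul_assoc ..).symm, (mul_assoc ..).symm,
    he.trans (rr_mul_eq φ hs.ge).symm, ?_, (rr_mul_eq φ he.ge).symm⟩
  dsimp only
  omega

theorem simP_of_isMulWitness (hBi : CondBi φ) (hC : CondC φ) {a b c d x y x' y' : S}
    (hab : rr φ a = rr φ b) (h : IsMulWitness φ b c x y) (h' : IsMulWitness φ b c x' y') :
    simP φ (x * a, y * d) (x' * a, y' * d) := by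
  obtain ⟨hxy, hr, hlx, hly⟩ := h
  obtain ⟨hxy', hr', hlx', hly'⟩ := h'
  obtain ⟨hk, hrk, hlk, hlk'⟩ := c_spec hC x x'
  set k := cx hC x x'
  set k' := cy hC x x'
  have := ll_mul φ k y
  have := ll_mul φ k' y'
  have hyy : k * y = k' * y' := by
    refine hBi _ _ c (by omega) (by omega) ?_
    rw [mul_assoc, ← hxy, ← mul_assoc, hk, mul_assoc, hxy', ← mul_assoc]
  have hrxa : rr φ (x * a) = rr φ x := rr_mul_eq φ (by omega)
  have hrxa' : rr φ (x' * a) = rr φ x' := rr_mul_eq φ (by omega)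
  refine ⟨k, k', ?_, ?_, ?_, ?_, hrk⟩ <;> dsimp only
  · rw [← mul_assoc, hk, mul_assoc]
  · rw [← mul_assoc, hyy, mul_assoc]
  all_goals omega

theorem simP_pairMul (hBi : CondBi φ) (hC : CondC φ) (p q : Sig φ) {x y : S}
    (h : IsMulWitness φ p.1.2 q.1.1 x y) :
    simP φ (pairMul hC p q).1 (x * p.1.1, y * q.1.2) :=
  simP_of_isMulWitness hBi hC p.2 (c_spec hC _ _) h

theorem pairMul_congr_left (hBi : CondBi φ) (hC : CondC φ) {p p' : Sig φ} (q : Sig φ)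
    (h : sim φ p p') : sim φ (pairMul hC p q) (pairMul hC p' q) := by
  obtain ⟨s, s', ha, hb, hs, hs', -⟩ := h
  obtain ⟨x, y, hw⟩ : ∃ x y, IsMulWitness φ (s * p.1.2) q.1.1 x y := hC _ _
  have hw' : IsMulWitness φ (s' * p'.1.2) q.1.1 x y := hb ▸ hw
  refine simP_trans hC (simP_pairMul hBi hC p q (hw.mul_left (hs.trans p.2))) ?_
  rw [mul_assoc, ha, ← mul_assoc]
  exact simP_symm (simP_pairMul hBi hC p' q (hw'.mul_left (hs'.trans p'.2)))

theorem pairMul_congr_right (hBi : CondBi φ) (hC : CondC φ) (p : Sig φ) {q q' : Sig φ}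
    (h : sim φ q q') : sim φ (pairMul hC p q) (pairMul hC p q') := by
  obtain ⟨t, t', hc, hd, ht, ht', -⟩ := h
  obtain ⟨x, y, hw⟩ : ∃ x y, IsMulWitness φ p.1.2 (t * q.1.1) x y := hC _ _
  have hw' : IsMulWitness φ p.1.2 (t' * q'.1.1) x y := hc ▸ hw
  refine simP_trans hC (simP_pairMul hBi hC p q (hw.mul_right ht)) ?_
  rw [mul_assoc, hd, ← mul_assoc]
  exact simP_symm (simP_pairMul hBi hC p q' (hw'.mul_right ht'))

theorem qmul_cls (hBi : CondBi φ) (hC : CondC φ) (p q : Sig φ) :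
    qmul hC (cls φ p) (cls φ q) = cls φ (pairMul hC p q) :=
  Quot.sound <| simP_trans hC (pairMul_congr_left hBi hC _ (out_sim hC p))
    (pairMul_congr_right hBi hC p (out_sim hC q))

theorem pairMul_pairMul_swap_sim (hBi : CondBi φ) (hC : CondC φ) (p : Sig φ) :
    sim φ (pairMul hC (pairMul hC p ⟨(p.1.2, p.1.1), p.2.symm⟩) p) p := by
  obtain ⟨⟨a, b⟩, hab⟩ := p
  obtain ⟨e, he⟩ : ∃ e, ll φ e = rr φ b := ⟨cx hC b b, ll_cx_self hC b⟩
  have hea : ll φ e = rr φ a := he.trans hab.symm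
  have hsquare : sim φ (pairMul hC ⟨(a, b), hab⟩ ⟨(b, a), hab.symm⟩) ⟨(a, a), rfl⟩ :=
    simP_trans hC (simP_pairMul hBi hC _ _ (isMulWitness_self he)) (simP_mul_left hC hea)
  exact simP_trans hC (pairMul_congr_left hBi hC _ hsquare)
    (simP_trans hC (simP_pairMul hBi hC _ _ (isMulWitness_self hea)) (simP_mul_left hC hea))

end

theorem stmt15_general {S : Type*} [Semigroup S] (φ : S →ₙ* Bicyclic)
    (hBi : CondBi φ) (hC : CondC φ) :
    ∀ p : Sig φ,
      qmul hC (qmul hC (cls φ p) (cls φ ⟨(p.1.2, p.1.1), p.2.symm⟩)) (cls φ p) =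
        cls φ p := by
  intro p
  rw [qmul_cls hBi hC, qmul_cls hBi hC]
  exact Quot.sound (pairMul_pairMul_swap_sim hBi hC p)

/-- `Q` is regular: `[a,b][b,a][a,b] = [a,b]`. -/
theorem stmt15 {S : Type*} [Semigroup S] (φ : S →ₙ* Bicyclic)
    (hA : CondA φ) (hBi : CondBi φ) (hBii : CondBii φ) (hC : CondC φ) :
    ∀ p : Sig φ,
      qmul hC (qmul hC (cls φ p) (cls φ ⟨(p.1.2, p.1.1), p.2.symm⟩)) (cls φ p) =
        cls φ p :=
  stmt15_general φ hBi hC
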